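/- arXiv:2111.15099 — 4 statements merged into one kernel-verified Lean document; each statement's English description precedes it below -/
import Mathlib

section
/- Let u be 1-Lipschitz on Ω ⊂ ℝ^d, let D be the set where ∇u exists, and for z ∈ D define ℓ±(z) = sup{t ≥ 0 : u(z ± t∇u(z)) − u(z) = ±t}. For j ∈ ℕ, on the set A_j = {z ∈ D : min(ℓ−(z), ℓ+(z)) > 1/j}, the map z ↦ ∇u(z) is Lipschitz with constant 4j. -/
open MeasureTheory

noncomputable section

abbrev Euc (d : ℕ) := EuclideanSpace ℝ (Fin d)

/-- `[x,y]` is a transport ray of `u` in `Ω`: `x ≠ y`, the Lipschitz inequality is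
saturated, and the segment is maximal with these properties. -/
def IsTransportRay {d : ℕ} (u : Euc d → ℝ) (Ω : Set (Euc d)) (x y : Euc d) : Prop :=
  x ≠ y ∧ segment ℝ x y ⊆ Ω ∧ u x - u y = ‖x - y‖ ∧
    ∀ z w : Euc d, z ≠ w → segment ℝ z w ⊆ Ω → u z - u w = ‖z - w‖ →
      segment ℝ x y ⊆ segment ℝ z w → segment ℝ z w = segment ℝ x y

/-- Ascending saturation length `ℓ₊(z)`. -/
def ellPlus {d : ℕ} (u : Euc d → ℝ) (Ω : Set (Euc d)) (z : Euc d) : ℝ :=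
  sSup {t : ℝ | 0 ≤ t ∧ z + t • gradient u z ∈ Ω ∧ u (z + t • gradient u z) - u z = t}

/-- Descending saturation length `ℓ₋(z)`. -/
def ellMinus {d : ℕ} (u : Euc d → ℝ) (Ω : Set (Euc d)) (z : Euc d) : ℝ :=
  sSup {t : ℝ | 0 ≤ t ∧ z - t • gradient u z ∈ Ω ∧ u (z - t • gradient u z) - u z = -t}

open Set Filter Topology

/-!
At a point `z` with `min (ℓ₋ z) (ℓ₊ z) > σ`, the gradient `g z` is a unit vector and `u` grows
with slope exactly one along `z ± σ g z`: a 1-Lipschitz function cannot do better, and the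
directional derivative `‖g z‖²` is at most `‖g z‖`. For two such points `x`, `y`, comparing
`u (x + σ g x)` with `u (y - σ g y)`, and `u (y + σ g y)` with `u (x - σ g x)`, gives
`4σ ≤ ‖e + v‖ + ‖e - v‖` with `e = x - y`, `v = σ (g x + g y)`. The parallelogram law, used once
for `e, v` and once for the unit vectors `g x, g y`, turns this into `σ ‖g x - g y‖ ≤ ‖x - y‖`.
With `σ = 1/j` this is even the constant `j`.
-/

theorem HasDerivWithinAt.le_of_eventually_sub_le_mul {φ : ℝ → ℝ} {φ' x c : ℝ}
    (hφ : HasDerivWithinAt φ φ' (Ici x) x) (h : ∀ᶠ s in 𝓝[>] x, φ s - φ x ≤ c * (s - x)) :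
    φ' ≤ c := by
  have hslope : Tendsto (slope φ x) (𝓝[>] x) (𝓝 φ') := by
    simpa using hasDerivWithinAt_iff_tendsto_slope.1 hφ
  refine le_of_tendsto hslope ?_
  filter_upwards [h, self_mem_nhdsWithin] with s hs hxs
  rw [slope_def_field, div_le_iff₀ (sub_pos.2 hxs)]
  exact hs

theorem LipschitzOnWith.sub_le_norm_sub {E : Type*} [SeminormedAddCommGroup E] {Ω : Set E}
    {u : E → ℝ} (hu : LipschitzOnWith 1 u Ω) {a b : E} (ha : a ∈ Ω) (hb : b ∈ Ω) :
    u a - u b ≤ ‖a - b‖ := by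
  have h := hu.dist_le_mul a ha b hb
  rw [NNReal.coe_one, one_mul, Real.dist_eq, dist_eq_norm] at h
  exact (le_abs_self _).trans h

theorem Convex.add_smul_mem_of_le {E : Type*} [AddCommGroup E] [Module ℝ E] {Ω : Set E}
    {v z : E} {s t : ℝ} (hΩ : Convex ℝ Ω) (hz : z ∈ Ω) (hzt : z + t • v ∈ Ω)
    (hs₀ : 0 ≤ s) (hst : s ≤ t) : z + s • v ∈ Ω := by
  rcases hs₀.eq_or_lt with rfl | hs
  · simpa using hz
  have ht : 0 < t := hs.trans_le hst
  have h := hΩ.add_smul_mem hz hzt ⟨div_nonneg hs.le ht.le, (div_le_one ht).2 hst⟩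
  rwa [smul_smul, div_mul_cancel₀ _ ht.ne'] at h

theorem LipschitzOnWith.sub_eq_of_sub_eq_of_le {E : Type*} [SeminormedAddCommGroup E]
    [NormedSpace ℝ E] {Ω : Set E} {u : E → ℝ} {v z : E} {s t : ℝ} (hΩ : Convex ℝ Ω)
    (hu : LipschitzOnWith 1 u Ω) (hv : ‖v‖ = 1) (hz : z ∈ Ω) (hzt : z + t • v ∈ Ω) (hsat : u (z + t • v) - u z = t)
    (hs₀ : 0 ≤ s) (hst : s ≤ t) : u (z + s • v) - u z = s := by
  have hzs := hΩ.add_smul_mem_of_le hz hzt hs₀ hst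
  have h₁ : u (z + s • v) - u z ≤ s := by
    simpa [norm_smul, hv, abs_of_nonneg hs₀] using hu.sub_le_norm_sub hzs hz
  have h₂ : u (z + t • v) - u (z + s • v) ≤ t - s := by
    have h := hu.sub_le_norm_sub hzt hzs
    rwa [add_sub_add_left_eq_sub, ← sub_smul, norm_smul, hv, mul_one, Real.norm_eq_abs,
      abs_of_nonneg (sub_nonneg.2 hst)] at h
  linarith

section InnerProductSpace

variable {E : Type*} [NormedAddCommGroup E] [InnerProductSpace ℝ E]
  {Ω : Set E} {u : E → ℝ} {g v z : E} {t : ℝ}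

theorem mul_norm_sub_le_of_le_norm_add_add_norm_sub {e g₁ g₂ : E} {σ : ℝ} (hσ : 0 ≤ σ)
    (hg₁ : ‖g₁‖ = 1) (hg₂ : ‖g₂‖ = 1)
    (h : 4 * σ ≤ ‖e + σ • (g₁ + g₂)‖ + ‖e - σ • (g₁ + g₂)‖) : σ * ‖g₁ - g₂‖ ≤ ‖e‖ := by
  have hpar₁ := parallelogram_law_with_norm ℝ e (σ • (g₁ + g₂))
  have hpar₂ := parallelogram_law_with_norm ℝ g₁ g₂
  rw [norm_smul, Real.norm_eq_abs, abs_of_nonneg hσ] at hpar₁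
  rw [hg₁, hg₂] at hpar₂
  have hsum : (4 * σ) ^ 2 ≤ (‖e + σ • (g₁ + g₂)‖ + ‖e - σ • (g₁ + g₂)‖) ^ 2 :=
    pow_le_pow_left₀ (by positivity) h 2
  have hsq : (σ * ‖g₁ - g₂‖) ^ 2 ≤ ‖e‖ ^ 2 := by
    nlinarith [sq_nonneg (‖e + σ • (g₁ + g₂)‖ - ‖e - σ • (g₁ + g₂)‖)]
  exact (pow_le_pow_iff_left₀ (by positivity) (norm_nonneg e) two_ne_zero).1 hsq

variable [CompleteSpace E]

theorem gradient_neg (u : E → ℝ) (z : E) : gradient (-u) z = -gradient u z := by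
  simp [gradient, fderiv_neg]

theorem HasGradientAt.inner_le_norm_of_lipschitzOnWith (hΩ : Convex ℝ Ω)
    (hu : LipschitzOnWith 1 u Ω) (hg : HasGradientAt u g z) (hz : z ∈ Ω) (ht : 0 < t)
    (hzt : z + t • v ∈ Ω) : inner ℝ g v ≤ ‖v‖ := by
  have hline : HasDerivAt (fun s : ℝ => z + s • v) v 0 := by
    simpa using ((hasDerivAt_id (0 : ℝ)).smul_const v).const_add z
  have hφ : HasDerivAt (fun s : ℝ => u (z + s • v)) (inner ℝ g v) 0 := by
    have hg' : HasFDerivAt u (InnerProductSpace.toDual ℝ E g) (z + (0 : ℝ) • v) := by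
      simpa using hg.hasFDerivAt
    have h := hg'.comp_hasDerivAt 0 hline
    rwa [InnerProductSpace.toDual_apply_apply] at h
  refine hφ.hasDerivWithinAt.le_of_eventually_sub_le_mul ?_
  filter_upwards [Ioc_mem_nhdsGT ht] with s ⟨hs₀, hst⟩
  have h := hu.sub_le_norm_sub (hΩ.add_smul_mem_of_le hz hzt hs₀.le hst) hz
  simpa [norm_smul, abs_of_pos hs₀, mul_comm] using h

theorem HasGradientAt.norm_eq_one_of_sub_eq (hΩ : Convex ℝ Ω) (hu : LipschitzOnWith 1 u Ω)
    (hg : HasGradientAt u g z) (hz : z ∈ Ω) (ht : 0 < t) (hzt : z + t • g ∈ Ω)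
    (hsat : u (z + t • g) - u z = t) : ‖g‖ = 1 := by
  have hle : ‖g‖ ^ 2 ≤ ‖g‖ := by
    simpa only [real_inner_self_eq_norm_sq] using
      hg.inner_le_norm_of_lipschitzOnWith hΩ hu hz ht hzt
  have hge : t ≤ t * ‖g‖ := by
    simpa [hsat, norm_smul, abs_of_pos ht] using hu.sub_le_norm_sub hzt hz
  nlinarith [norm_nonneg g]

end InnerProductSpace

section EuclideanSpace

variable {d : ℕ} {Ω : Set (Euc d)} {u : Euc d → ℝ} {x y z : Euc d} {σ : ℝ}

theorem ellMinus_eq_ellPlus_neg (u : Euc d → ℝ) (Ω : Set (Euc d)) (z : Euc d) :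
    ellMinus u Ω z = ellPlus (-u) Ω z := by
  simp only [ellMinus, ellPlus, gradient_neg, smul_neg, ← sub_eq_add_neg, Pi.neg_apply]
  congr 1
  ext t
  refine and_congr_right fun _ => and_congr_right fun _ => ?_
  constructor <;> intro h <;> linarith

theorem exists_lt_of_lt_ellPlus (hz : z ∈ Ω) (hσ : σ < ellPlus u Ω z) :
    ∃ t, σ < t ∧ z + t • gradient u z ∈ Ω ∧ u (z + t • gradient u z) - u z = t := by
  obtain ⟨t, ⟨-, hzt, hsat⟩, hσt⟩ := exists_lt_of_lt_csSup ⟨0, by simp [hz]⟩ hσ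
  exact ⟨t, hσt, hzt, hsat⟩

theorem norm_gradient_eq_one_and_sub_eq_of_lt_ellPlus (hΩ : Convex ℝ Ω)
    (hu : LipschitzOnWith 1 u Ω) (hz : z ∈ Ω) (hdiff : DifferentiableAt ℝ u z) (hσ₀ : 0 ≤ σ)
    (hσ : σ < ellPlus u Ω z) :
    ‖gradient u z‖ = 1 ∧ z + σ • gradient u z ∈ Ω ∧ u (z + σ • gradient u z) - u z = σ := by
  obtain ⟨t, hσt, hzt, hsat⟩ := exists_lt_of_lt_ellPlus hz hσ
  have hg := hdiff.hasGradientAt.norm_eq_one_of_sub_eq hΩ hu hz (hσ₀.trans_lt hσt) hzt hsat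
  exact ⟨hg, hΩ.add_smul_mem_of_le hz hzt hσ₀ hσt.le,
    hu.sub_eq_of_sub_eq_of_le hΩ hg hz hzt hsat hσ₀ hσt.le⟩

theorem norm_gradient_eq_one_and_sub_eq_of_lt_ellMinus (hΩ : Convex ℝ Ω)
    (hu : LipschitzOnWith 1 u Ω) (hz : z ∈ Ω) (hdiff : DifferentiableAt ℝ u z) (hσ₀ : 0 ≤ σ)
    (hσ : σ < ellMinus u Ω z) :
    ‖gradient u z‖ = 1 ∧ z - σ • gradient u z ∈ Ω ∧ u (z - σ • gradient u z) - u z = -σ := by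
  rw [ellMinus_eq_ellPlus_neg] at hσ
  obtain ⟨hg, hzσ, hsat⟩ :=
    norm_gradient_eq_one_and_sub_eq_of_lt_ellPlus hΩ hu.neg hz hdiff.neg hσ₀ hσ
  simp only [gradient_neg, norm_neg, smul_neg, ← sub_eq_add_neg, Pi.neg_apply] at hg hzσ hsat
  exact ⟨hg, hzσ, by linarith⟩

theorem mul_norm_gradient_sub_le_norm_sub (hΩ : Convex ℝ Ω) (hu : LipschitzOnWith 1 u Ω)
    (hσ₀ : 0 ≤ σ) (hx : x ∈ Ω) (hxd : DifferentiableAt ℝ u x)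
    (hxσ : σ < min (ellMinus u Ω x) (ellPlus u Ω x)) (hy : y ∈ Ω)
    (hyd : DifferentiableAt ℝ u y) (hyσ : σ < min (ellMinus u Ω y) (ellPlus u Ω y)) :
    σ * ‖gradient u x - gradient u y‖ ≤ ‖x - y‖ := by
  rw [lt_min_iff] at hxσ hyσ
  obtain ⟨hgx, hxp, hxpsat⟩ :=
    norm_gradient_eq_one_and_sub_eq_of_lt_ellPlus hΩ hu hx hxd hσ₀ hxσ.2
  obtain ⟨-, hxm, hxmsat⟩ :=
    norm_gradient_eq_one_and_sub_eq_of_lt_ellMinus hΩ hu hx hxd hσ₀ hxσ.1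
  obtain ⟨hgy, hyp, hypsat⟩ :=
    norm_gradient_eq_one_and_sub_eq_of_lt_ellPlus hΩ hu hy hyd hσ₀ hyσ.2
  obtain ⟨-, hym, hymsat⟩ :=
    norm_gradient_eq_one_and_sub_eq_of_lt_ellMinus hΩ hu hy hyd hσ₀ hyσ.1
  refine mul_norm_sub_le_of_le_norm_add_add_norm_sub hσ₀ hgx hgy ?_
  have h₁ := hu.sub_le_norm_sub hxp hym
  have h₂ := hu.sub_le_norm_sub hyp hxm
  rw [show x + σ • gradient u x - (y - σ • gradient u y)
      = x - y + σ • (gradient u x + gradient u y) by rw [smul_add]; abel] at h₁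
  rw [show y + σ • gradient u y - (x - σ • gradient u x)
      = -(x - y - σ • (gradient u x + gradient u y)) by rw [smul_add]; abel, norm_neg] at h₂
  linarith

end EuclideanSpace

theorem gradient_lipschitz_away_from_endpoints_general {d : ℕ} (Ω : Set (Euc d))
    (hΩconv : Convex ℝ Ω)
    (u : Euc d → ℝ) (hu : LipschitzOnWith 1 u Ω)
    (j : ℕ) (hj : 0 < j) :
    LipschitzOnWith (4 * j) (gradient u)
      {z ∈ Ω | DifferentiableAt ℝ u z ∧
        1 / (j : ℝ) < min (ellMinus u Ω z) (ellPlus u Ω z)} := by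
  have hj' : (0 : ℝ) < j := Nat.cast_pos.2 hj
  refine LipschitzOnWith.of_dist_le_mul fun x ⟨hx, hxd, hxσ⟩ y ⟨hy, hyd, hyσ⟩ => ?_
  have h := mul_norm_gradient_sub_le_norm_sub hΩconv hu (by positivity) hx hxd hxσ hy hyd hyσ
  rw [one_div, inv_mul_le_iff₀ hj'] at h
  rw [dist_eq_norm, dist_eq_norm]
  calc ‖gradient u x - gradient u y‖ ≤ j * ‖x - y‖ := h
    _ ≤ ↑(4 * j : NNReal) * ‖x - y‖ := by push_cast; gcongr; linarith

/-- the gradient of `u` is `4j`-Lipschitz on the set `A_j` of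
differentiability points at distance more than `1/j` from ray endpoints. -/
theorem gradient_lipschitz_away_from_endpoints {d : ℕ} (Ω : Set (Euc d))
    (hΩc : IsCompact Ω) (hΩconv : Convex ℝ Ω)
    (u : Euc d → ℝ) (hu : LipschitzOnWith 1 u Ω)
    (j : ℕ) (hj : 0 < j) :
    LipschitzOnWith (4 * j) (gradient u)
      {z ∈ Ω | DifferentiableAt ℝ u z ∧
        1 / (j : ℝ) < min (ellMinus u Ω z) (ellPlus u Ω z)} :=
  gradient_lipschitz_away_from_endpoints_general Ω hΩconv u hu j hj
end
end

section
/- Let μ, ν be probability measures on a compact convex Ω ⊂ ℝ^d with μ absolutely continuous with respect to Lebesgue measure, let u₀ be a Kantorovich potential and T₀ an optimal transport map for (μ,ν) with the Euclidean cost |x−y|. Then for μ-almost every x: if x ≠ T₀(x), then u₀ is differentiable at x and −∇u₀(x) = (T₀(x) − x)/|T₀(x) − x|. -/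
/-! Since `u₀` is 1-Lipschitz, `u₀ x - u₀ (T₀ x) ≤ ‖x - T₀ x‖` everywhere, while optimality of
`u₀` and of `T₀` says that both sides have the same `μ`-integral `W₁(μ, ν)`; hence equality holds
`μ`-a.e. At such a point with `x ≠ T₀ x`, `u₀` decreases with unit slope along the whole segment
`[x, T₀ x]`, so its derivative in the unit direction `e` from `x` to `T₀ x` is `-1`. As
`‖∇u₀ x‖ ≤ 1`, the equality case of Cauchy–Schwarz forces `∇u₀ x = -e`. Differentiability
`μ`-a.e. is Rademacher's theorem together with `μ ≪ volume`. -/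

open MeasureTheory

noncomputable section

/-- The Wasserstein-1 distance, defined through Kantorovich duality as the supremum of
`∫ u dμ - ∫ u dν` over 1-Lipschitz functions `u`. -/
def W1 {d : ℕ} (μ ν : Measure (Euc d)) : ℝ :=
  sSup {r : ℝ | ∃ u : Euc d → ℝ, LipschitzWith 1 u ∧ r = (∫ x, u x ∂μ) - ∫ y, u y ∂ν}

/-- `u` is a Kantorovich potential for the pair `(μ, ν)`. -/
def IsKantorovichPotential {d : ℕ} (u : Euc d → ℝ) (μ ν : Measure (Euc d)) : Prop :=
  LipschitzWith 1 u ∧ (∫ x, u x ∂μ) - ∫ y, u y ∂ν = W1 μ ν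

/-- `T` is an optimal transport map for the pair `(μ, ν)`. -/
def IsOptimalMap {d : ℕ} (T : Euc d → Euc d) (μ ν : Measure (Euc d)) : Prop :=
  Measure.map T μ = ν ∧ (∫ x, ‖x - T x‖ ∂μ) = W1 μ ν

/-- The minimal transport length `ℓ₀(T) = essinf_μ |Id - T|`. -/
def ell0 {d : ℕ} (T : Euc d → Euc d) (μ : Measure (Euc d)) : ℝ :=
  essInf (fun x => ‖x - T x‖) μ

open Set AffineMap

section LineMap

variable {E : Type*} [NormedAddCommGroup E] [NormedSpace ℝ E] {u : E → ℝ} {x y : E}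

theorem LipschitzWith.apply_lineMap_eq_of_sub_eq_dist (hu : LipschitzWith 1 u)
    (hxy : u x - u y = dist x y) {t : ℝ} (ht : t ∈ Icc (0 : ℝ) 1) :
    u (lineMap x y t) = u x - t * dist x y := by
  have hleft := hu.le_add_mul x (lineMap x y t)
  have hright := hu.le_add_mul (lineMap x y t) y
  rw [dist_left_lineMap, Real.norm_of_nonneg ht.1] at hleft
  rw [dist_lineMap_right, Real.norm_of_nonneg (sub_nonneg.2 ht.2)] at hright
  simp only [NNReal.coe_one, one_mul] at hleft hright
  linarith

theorem HasFDerivAt.apply_sub_eq_neg_dist_of_sub_eq_dist {f' : E →L[ℝ] ℝ}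
    (hf : HasFDerivAt u f' x) (hu : LipschitzWith 1 u) (hxy : u x - u y = dist x y) :
    f' (y - x) = -dist x y := by
  have hcomp : HasDerivAt (fun t : ℝ => u (lineMap x y t)) (f' (y - x)) 0 := by
    rw [← lineMap_apply_zero x y (k := ℝ)] at hf
    exact hf.comp_hasDerivAt (0 : ℝ) hasDerivAt_lineMap
  have hline : HasDerivWithinAt (fun t : ℝ => u (lineMap x y t)) (-dist x y) (Icc 0 1) 0 := by
    have hlin : HasDerivAt (fun t : ℝ => u x - t * dist x y) (-dist x y) 0 := by
      simpa using ((hasDerivAt_id (0 : ℝ)).mul_const (dist x y)).const_sub (u x)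
    refine hlin.hasDerivWithinAt.congr (fun t ht => hu.apply_lineMap_eq_of_sub_eq_dist hxy ht) ?_
    simp
  exact (uniqueDiffOn_Icc zero_lt_one 0 (left_mem_Icc.2 zero_le_one)).eq_deriv _
    hcomp.hasDerivWithinAt hline

end LineMap

theorem eq_smul_of_norm_le_one_of_inner_eq_norm {F : Type*} [NormedAddCommGroup F]
    [InnerProductSpace ℝ F] {a v : F} (ha : ‖a‖ ≤ 1) (hv : v ≠ 0) (h : inner ℝ a v = ‖v‖) :
    a = ‖v‖⁻¹ • v := by
  have hv' : 0 < ‖v‖ := norm_pos_iff.2 hv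
  have ha1 : ‖a‖ = 1 := by
    have := real_inner_le_norm a v
    exact le_antisymm ha (le_of_mul_le_mul_right (by linarith) hv')
  have hcs := (inner_eq_norm_mul_iff_real (x := a) (y := v)).1 (by rw [h, ha1, one_mul])
  rw [ha1, one_smul] at hcs
  exact (eq_inv_smul_iff₀ hv'.ne').2 hcs

theorem LipschitzWith.neg_gradient_eq_of_sub_eq_dist {F : Type*} [NormedAddCommGroup F]
    [InnerProductSpace ℝ F] [CompleteSpace F] {u : F → ℝ} {x y : F} (hu : LipschitzWith 1 u)
    (hx : DifferentiableAt ℝ u x) (hxy : u x - u y = dist x y) (hne : x ≠ y) :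
    -gradient u x = ‖y - x‖⁻¹ • (y - x) := by
  have hf := hx.hasGradientAt.hasFDerivAt
  refine eq_smul_of_norm_le_one_of_inner_eq_norm ?_ (sub_ne_zero.2 hne.symm) ?_
  · rw [norm_neg, ← (InnerProductSpace.toDual ℝ F).norm_map]
    simpa using hf.le_of_lipschitz hu
  · have := hf.apply_sub_eq_neg_dist_of_sub_eq_dist hu hxy
    rw [InnerProductSpace.toDual_apply_apply] at this
    rw [inner_neg_left, this, neg_neg, dist_comm, dist_eq_norm]

theorem Continuous.integrable_of_measure_compl_eq_zero {X G : Type*} [TopologicalSpace X]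
    [MeasurableSpace X] [OpensMeasurableSpace X] [T2Space X] [NormedAddCommGroup G]
    {μ : Measure X} [IsFiniteMeasure μ] {K : Set X} {f : X → G} (hf : Continuous f)
    (hK : IsCompact K) (hμK : μ Kᶜ = 0) : Integrable f μ := by
  rw [← Measure.restrict_eq_self_of_ae_mem (mem_ae_iff.2 hμK)]
  exact hf.continuousOn.integrableOn_compact hK

theorem LipschitzWith.ae_sub_comp_eq_norm_of_integral_eq {E : Type*} [NormedAddCommGroup E]
    [MeasurableSpace E] [OpensMeasurableSpace E] {μ : Measure E} {u : E → ℝ} {T : E → E}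
    (hu : LipschitzWith 1 u) (hT : AEMeasurable T μ)
    (hcost : Integrable (fun x => ‖x - T x‖) μ) (huμ : Integrable u μ)
    (huν : Integrable u (μ.map T))
    (h : ∫ x, ‖x - T x‖ ∂μ = ∫ x, u x ∂μ - ∫ y, u y ∂μ.map T) :
    ∀ᵐ x ∂μ, u x - u (T x) = ‖x - T x‖ := by
  have hum := hu.continuous.aestronglyMeasurable (μ := μ.map T)
  have huT : Integrable (fun x => u (T x)) μ := (integrable_map_measure hum hT).1 huν
  have hle : ∀ x, u x - u (T x) ≤ ‖x - T x‖ := fun x => by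
    simpa [dist_eq_norm, add_comm] using hu.le_add_mul x (T x)
  refine (integral_eq_iff_of_ae_le (huμ.sub huT) hcost (ae_of_all _ hle)).1 ?_
  change ∫ x, u x - u (T x) ∂μ = _
  rw [integral_sub huμ huT, h, integral_map hT hum]

theorem IsKantorovichPotential.ae_sub_eq_norm_of_isOptimalMap {d : ℕ} {Ω : Set (Euc d)}
    (hΩ : IsCompact Ω) {μ ν : Measure (Euc d)} [IsFiniteMeasure μ] [NeZero ν]
    (hμΩ : μ Ωᶜ = 0) (hνΩ : ν Ωᶜ = 0) {u : Euc d → ℝ} (hu : IsKantorovichPotential u μ ν)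
    {T : Euc d → Euc d} (hT : IsOptimalMap T μ ν) :
    ∀ᵐ x ∂μ, u x - u (T x) = ‖x - T x‖ := by
  obtain ⟨hlip, hpot⟩ := hu
  obtain ⟨rfl, hcost⟩ := hT
  have hTm : AEMeasurable T μ := .of_map_ne_zero (NeZero.ne _)
  have hid : Integrable id μ := continuous_id.integrable_of_measure_compl_eq_zero hΩ hμΩ
  have hTint : Integrable T μ := (integrable_map_measure aestronglyMeasurable_id hTm).1
    (continuous_id.integrable_of_measure_compl_eq_zero hΩ hνΩ)
  exact hlip.ae_sub_comp_eq_norm_of_integral_eq hTm (hid.sub hTint).norm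
    (hlip.continuous.integrable_of_measure_compl_eq_zero hΩ hμΩ)
    (hlip.continuous.integrable_of_measure_compl_eq_zero hΩ hνΩ) (hcost.trans hpot.symm)

theorem grad_potential_is_transport_direction_general {d : ℕ} (Ω : Set (Euc d))
    (hΩc : IsCompact Ω)
    (μ ν : Measure (Euc d)) [IsProbabilityMeasure μ] [IsProbabilityMeasure ν]
    (hμΩ : μ Ωᶜ = 0) (hνΩ : ν Ωᶜ = 0) (hac : μ ≪ volume)
    (u₀ : Euc d → ℝ) (hu₀ : IsKantorovichPotential u₀ μ ν)
    (T₀ : Euc d → Euc d) (hT₀ : IsOptimalMap T₀ μ ν) :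
    ∀ᵐ x ∂μ, x ≠ T₀ x → DifferentiableAt ℝ u₀ x ∧
      -gradient u₀ x = ‖T₀ x - x‖⁻¹ • (T₀ x - x) := by
  have hsat := hu₀.ae_sub_eq_norm_of_isOptimalMap hΩc hμΩ hνΩ hT₀
  have hdiff : ∀ᵐ x ∂μ, DifferentiableAt ℝ u₀ x :=
    hac.ae_le hu₀.1.ae_differentiableAt
  filter_upwards [hsat, hdiff] with x hx hdx hne
  exact ⟨hdx, hu₀.1.neg_gradient_eq_of_sub_eq_dist hdx (by rwa [dist_eq_norm]) hne⟩

/-- μ-a.e., if `x ≠ T₀(x)` then `u₀` is differentiable at `x` and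
`-∇u₀(x)` is the unit vector pointing from `x` to `T₀(x)`. -/
theorem grad_potential_is_transport_direction {d : ℕ} (Ω : Set (Euc d))
    (hΩc : IsCompact Ω) (hΩconv : Convex ℝ Ω)
    (μ ν : Measure (Euc d)) [IsProbabilityMeasure μ] [IsProbabilityMeasure ν]
    (hμΩ : μ Ωᶜ = 0) (hνΩ : ν Ωᶜ = 0) (hac : μ ≪ volume)
    (u₀ : Euc d → ℝ) (hu₀ : IsKantorovichPotential u₀ μ ν)
    (T₀ : Euc d → Euc d) (hT₀ : IsOptimalMap T₀ μ ν) :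
    ∀ᵐ x ∂μ, x ≠ T₀ x → DifferentiableAt ℝ u₀ x ∧
      -gradient u₀ x = ‖T₀ x - x‖⁻¹ • (T₀ x - x) :=
  grad_potential_is_transport_direction_general Ω hΩc μ ν hμΩ hνΩ hac u₀ hu₀ T₀ hT₀
end
end

section
/- Let μ ≪ Lebesgue, u₀ a Kantorovich potential and T₀ an optimal transport map for (μ,ν), and let ℓ₀(T₀) = essinf_μ |x − T₀(x)|. If the step size η₀ satisfies 0 < η₀ < ℓ₀(T₀), and f₀(x) = x − η₀∇u₀(x) where ∇u₀ exists and f₀(x) = x otherwise, then u₀ is also a Kantorovich potential for the pair ((f₀)_#μ, ν). -/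
/-!
On a transport ray the potential drops at unit rate: μ-a.e. `u₀ x - u₀ (T₀ x) = ‖x - T₀ x‖`,
because the integrated gap `∫ ‖x - T₀ x‖ - (u₀ x - u₀ (T₀ x)) dμ` is `W₁ - W₁ = 0`.
At a point of differentiability this forces `∇u₀ x` to be the unit vector from `T₀ x` to `x`,
so a gradient step of length `η₀ < ‖x - T₀ x‖` stays on the segment `[x, T₀ x]`, where `u₀` still
drops at unit rate. Hence `u₀ (f₀ x) - u₀ (T₀ x) = ‖f₀ x - T₀ x‖` a.e., and the coupling
`x ↦ (f₀ x, T₀ x)` certifies that `u₀` attains the supremum defining `W₁((f₀)_#μ, ν)`.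
-/

open MeasureTheory

noncomputable section

open Metric Set

lemma LipschitzWith.sub_le_dist {α : Type*} [PseudoMetricSpace α] {u : α → ℝ}
    (hu : LipschitzWith 1 u) (x y : α) : u x - u y ≤ dist x y := by
  have := hu.le_add_mul x y
  rw [NNReal.coe_one, one_mul] at this
  linarith

section Ray

variable {E : Type*} [NormedAddCommGroup E] [NormedSpace ℝ E] {u : E → ℝ} {x y z : E}

lemma LipschitzWith.sub_eq_dist_of_mem_segment (hu : LipschitzWith 1 u)
    (hxy : u x - u y = dist x y) (hz : z ∈ segment ℝ x y) : u z - u y = dist z y := by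
  have hxz := hu.sub_le_dist x z
  have hzy := hu.sub_le_dist z y
  have := dist_add_dist_of_mem_segment hz
  linarith

lemma LipschitzWith.fderiv_sub_eq_neg_dist (hu : LipschitzWith 1 u)
    (hd : DifferentiableAt ℝ u x) (hxy : u x - u y = dist x y) :
    fderiv ℝ u x (y - x) = -dist x y := by
  have hline : EqOn (fun t : ℝ => u (AffineMap.lineMap x y t)) (fun t => u x - t * dist x y)
      (Icc 0 1) := by
    intro t ht
    have hmem : AffineMap.lineMap x y t ∈ segment ℝ x y :=
      segment_eq_image_lineMap ℝ x y ▸ mem_image_of_mem _ ht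
    have := hu.sub_eq_dist_of_mem_segment hxy hmem
    rw [dist_lineMap_right, Real.norm_eq_abs, abs_of_nonneg (by linarith [ht.2])] at this
    linarith
  have hcomp : HasDerivWithinAt (fun t : ℝ => u (AffineMap.lineMap x y t))
      (fderiv ℝ u x (y - x)) (Icc 0 1) 0 := by
    have hfd : HasFDerivAt u (fderiv ℝ u x) (AffineMap.lineMap x y (0 : ℝ)) := by
      simpa using hd.hasFDerivAt
    exact (hfd.comp_hasDerivAt 0 AffineMap.hasDerivAt_lineMap).hasDerivWithinAt
  have haffine : HasDerivWithinAt (fun t : ℝ => u x - t * dist x y) (-dist x y) (Icc 0 1) 0 := by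
    simpa using ((hasDerivAt_id (0 : ℝ)).mul_const (dist x y)).const_sub (u x) |>.hasDerivWithinAt
  exact (uniqueDiffOn_Icc zero_lt_one 0 (left_mem_Icc.2 zero_le_one)).eq_deriv _ hcomp
    (haffine.congr hline (hline (left_mem_Icc.2 zero_le_one)))

end Ray

section Gradient

variable {E : Type*} [NormedAddCommGroup E] [InnerProductSpace ℝ E]

lemma eq_of_norm_le_of_inner_eq_norm_sq {a b : E} (hab : ‖a‖ ≤ ‖b‖)
    (hinner : inner ℝ a b = ‖b‖ ^ 2) : a = b := by
  have hsq : ‖a - b‖ ^ 2 ≤ 0 := by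
    rw [norm_sub_sq_real, hinner]
    nlinarith [norm_nonneg a]
  rw [← sub_eq_zero, ← norm_eq_zero]
  nlinarith [norm_nonneg (a - b)]

variable [CompleteSpace E] {u : E → ℝ} {x y : E}

lemma LipschitzWith.norm_gradient_le {K : NNReal} (hu : LipschitzWith K u) (x : E) :
    ‖gradient u x‖ ≤ K := by
  rw [gradient, LinearIsometryEquiv.norm_map]
  exact norm_fderiv_le_of_lipschitz ℝ hu

lemma LipschitzWith.gradient_eq_of_sub_eq_dist (hu : LipschitzWith 1 u)
    (hd : DifferentiableAt ℝ u x) (hxy : u x - u y = dist x y) (hne : x ≠ y) :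
    gradient u x = ‖x - y‖⁻¹ • (x - y) := by
  have hpos : 0 < ‖x - y‖ := norm_pos_iff.2 (sub_ne_zero.2 hne)
  have hunit : ‖‖x - y‖⁻¹ • (x - y)‖ = 1 := by
    rw [norm_smul, norm_inv, norm_norm, inv_mul_cancel₀ hpos.ne']
  have hderiv : fderiv ℝ u x (x - y) = ‖x - y‖ := by
    have h := hu.fderiv_sub_eq_neg_dist hd hxy
    rw [← neg_sub x y, map_neg, dist_eq_norm] at h
    linarith
  refine eq_of_norm_le_of_inner_eq_norm_sq (hunit ▸ hu.norm_gradient_le x) ?_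
  rw [hunit, inner_smul_right, gradient, InnerProductSpace.toDual_symm_apply, hderiv,
    inv_mul_cancel₀ hpos.ne', one_pow]

/-- A gradient step shorter than the ray stays on the segment `[x, y]`. -/
lemma LipschitzWith.sub_gradient_step_sub_eq_dist (hu : LipschitzWith 1 u)
    (hd : DifferentiableAt ℝ u x) (hxy : u x - u y = dist x y) {η : ℝ} (hη₀ : 0 ≤ η)
    (hη : η < dist x y) :
    u (x - η • gradient u x) - u y = dist (x - η • gradient u x) y := by
  have hpos : 0 < ‖x - y‖ := by rw [← dist_eq_norm]; linarith
  have hne : x ≠ y := fun h => by simp [h] at hpos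
  have hstep : x - η • gradient u x = x + (η / ‖x - y‖) • (y - x) := by
    rw [hu.gradient_eq_of_sub_eq_dist hd hxy hne, smul_smul, ← neg_sub y x, smul_neg,
      sub_neg_eq_add, div_eq_mul_inv]
  have ht : η / ‖x - y‖ ∈ Icc (0 : ℝ) 1 :=
    ⟨div_nonneg hη₀ hpos.le, (div_le_one hpos).2 (dist_eq_norm x y ▸ hη.le)⟩
  refine hu.sub_eq_dist_of_mem_segment hxy ?_
  rw [hstep]
  exact (convex_segment x y).add_smul_sub_mem (left_mem_segment ℝ x y)
    (right_mem_segment ℝ x y) ht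

end Gradient

lemma integrable_comp_of_ae_mem_isCompact {X Y : Type*} [MeasurableSpace X]
    [TopologicalSpace Y] [MeasurableSpace Y] [OpensMeasurableSpace Y] {μ : Measure X}
    [IsFiniteMeasure μ] {u : Y → ℝ} (hu : Continuous u) {g : X → Y} (hg : AEMeasurable g μ)
    {K : Set Y} (hK : IsCompact K) (hgK : ∀ᵐ x ∂μ, g x ∈ K) :
    Integrable (fun x => u (g x)) μ := by
  obtain ⟨C, hC⟩ := hK.exists_bound_of_continuousOn hu.continuousOn
  exact .of_bound (hu.measurable.comp_aemeasurable hg).aestronglyMeasurable C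
    (hgK.mono fun x hx => hC _ hx)

section Coupling

variable {X : Type*} [MeasurableSpace X] {μ : Measure X} [IsFiniteMeasure μ] {d : ℕ}
  {S T : X → Euc d} {K : Set (Euc d)}

lemma integral_map_sub_integral_map_eq (hS : AEMeasurable S μ) (hT : AEMeasurable T μ)
    (hK : IsCompact K) (hSK : ∀ᵐ x ∂μ, S x ∈ K) (hTK : ∀ᵐ x ∂μ, T x ∈ K) {u : Euc d → ℝ}
    (hu : Continuous u) :
    (∫ x, u x ∂μ.map S) - ∫ y, u y ∂μ.map T = ∫ x, (u (S x) - u (T x)) ∂μ := by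
  rw [integral_map hS hu.aestronglyMeasurable, integral_map hT hu.aestronglyMeasurable,
    integral_sub (integrable_comp_of_ae_mem_isCompact hu hS hK hSK)
      (integrable_comp_of_ae_mem_isCompact hu hT hK hTK)]

lemma integrable_norm_sub_of_ae_mem_isBounded (hS : AEMeasurable S μ) (hT : AEMeasurable T μ)
    (hK : Bornology.IsBounded K) (hSK : ∀ᵐ x ∂μ, S x ∈ K) (hTK : ∀ᵐ x ∂μ, T x ∈ K) :
    Integrable (fun x => ‖S x - T x‖) μ :=
  .of_bound (hS.sub hT).norm.aestronglyMeasurable (diam K) <| by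
    filter_upwards [hSK, hTK] with x hx hy
    rw [norm_norm, ← dist_eq_norm]
    exact dist_le_diam_of_mem hK hx hy

lemma integral_map_sub_integral_map_le (hS : AEMeasurable S μ) (hT : AEMeasurable T μ)
    (hK : IsCompact K) (hSK : ∀ᵐ x ∂μ, S x ∈ K) (hTK : ∀ᵐ x ∂μ, T x ∈ K) {u : Euc d → ℝ}
    (hu : LipschitzWith 1 u) :
    (∫ x, u x ∂μ.map S) - ∫ y, u y ∂μ.map T ≤ ∫ x, ‖S x - T x‖ ∂μ := by
  rw [integral_map_sub_integral_map_eq hS hT hK hSK hTK hu.continuous]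
  refine integral_mono
    ((integrable_comp_of_ae_mem_isCompact hu.continuous hS hK hSK).sub
      (integrable_comp_of_ae_mem_isCompact hu.continuous hT hK hTK))
    (integrable_norm_sub_of_ae_mem_isBounded hS hT hK.isBounded hSK hTK) fun x => ?_
  simpa only [dist_eq_norm] using hu.sub_le_dist (S x) (T x)

lemma isKantorovichPotential_map (hS : AEMeasurable S μ) (hT : AEMeasurable T μ)
    (hK : IsCompact K) (hSK : ∀ᵐ x ∂μ, S x ∈ K) (hTK : ∀ᵐ x ∂μ, T x ∈ K) {u : Euc d → ℝ}
    (hu : LipschitzWith 1 u) (hsat : ∀ᵐ x ∂μ, u (S x) - u (T x) = ‖S x - T x‖) :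
    IsKantorovichPotential u (μ.map S) (μ.map T) := by
  have hu_eq : (∫ x, u x ∂μ.map S) - ∫ y, u y ∂μ.map T = ∫ x, ‖S x - T x‖ ∂μ := by
    rw [integral_map_sub_integral_map_eq hS hT hK hSK hTK hu.continuous]
    exact integral_congr_ae hsat
  have hgreatest : IsGreatest {r : ℝ | ∃ v : Euc d → ℝ, LipschitzWith 1 v ∧
      r = (∫ x, v x ∂μ.map S) - ∫ y, v y ∂μ.map T} (∫ x, ‖S x - T x‖ ∂μ) :=
    ⟨⟨u, hu, hu_eq.symm⟩, by
      rintro r ⟨v, hv, rfl⟩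
      exact integral_map_sub_integral_map_le hS hT hK hSK hTK hv⟩
  exact ⟨hu, hu_eq.trans hgreatest.csSup_eq.symm⟩

lemma ae_sub_eq_norm_of_isKantorovichPotential (hS : AEMeasurable S μ)
    (hT : AEMeasurable T μ) (hK : IsCompact K) (hSK : ∀ᵐ x ∂μ, S x ∈ K)
    (hTK : ∀ᵐ x ∂μ, T x ∈ K) {u : Euc d → ℝ}
    (hu : IsKantorovichPotential u (μ.map S) (μ.map T))
    (hopt : ∫ x, ‖S x - T x‖ ∂μ = W1 (μ.map S) (μ.map T)) :
    ∀ᵐ x ∂μ, u (S x) - u (T x) = ‖S x - T x‖ := by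
  have hnorm_int := integrable_norm_sub_of_ae_mem_isBounded hS hT hK.isBounded hSK hTK
  have hdiff_int : Integrable (fun x => u (S x) - u (T x)) μ :=
    (integrable_comp_of_ae_mem_isCompact hu.1.continuous hS hK hSK).sub
      (integrable_comp_of_ae_mem_isCompact hu.1.continuous hT hK hTK)
  have hgap_nonneg : 0 ≤ᵐ[μ] fun x => ‖S x - T x‖ - (u (S x) - u (T x)) :=
    .of_forall fun x => sub_nonneg.2 (dist_eq_norm (S x) (T x) ▸ hu.1.sub_le_dist (S x) (T x))
  have hgap : ∫ x, (‖S x - T x‖ - (u (S x) - u (T x))) ∂μ = 0 := by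
    rw [integral_sub hnorm_int hdiff_int,
      ← integral_map_sub_integral_map_eq hS hT hK hSK hTK hu.1.continuous, hu.2, hopt, sub_self]
  filter_upwards [(integral_eq_zero_iff_of_nonneg_ae hgap_nonneg (hnorm_int.sub hdiff_int)).1 hgap]
    with x hx
  exact (sub_eq_zero.1 hx).symm

end Coupling

theorem potential_persists_after_step_general {d : ℕ} (Ω : Set (Euc d))
    (hΩc : IsCompact Ω)
    (μ ν : Measure (Euc d)) [IsProbabilityMeasure μ] [IsProbabilityMeasure ν]
    (hμΩ : μ Ωᶜ = 0) (hνΩ : ν Ωᶜ = 0) (hac : μ ≪ volume)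
    (u₀ : Euc d → ℝ) (hu₀ : IsKantorovichPotential u₀ μ ν)
    (T₀ : Euc d → Euc d) (hT₀ : IsOptimalMap T₀ μ ν)
    (η₀ : ℝ) (hη₀pos : 0 < η₀) (hη₀ : η₀ < ell0 T₀ μ)
    (f₀ : Euc d → Euc d) (hf₀m : Measurable f₀)
    (hf₀ : ∀ x, DifferentiableAt ℝ u₀ x → f₀ x = x - η₀ • gradient u₀ x) :
    IsKantorovichPotential u₀ (Measure.map f₀ μ) ν := by
  obtain ⟨hT₀push, hT₀opt⟩ := hT₀
  have hT₀m : AEMeasurable T₀ μ := .of_map_ne_zero (hT₀push ▸ IsProbabilityMeasure.ne_zero ν)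
  subst hT₀push
  have hΩμ : ∀ᵐ x ∂μ, x ∈ Ω := mem_ae_iff.2 hμΩ
  have hT₀Ω : ∀ᵐ x ∂μ, T₀ x ∈ Ω := ae_of_ae_map hT₀m (mem_ae_iff.2 hνΩ)
  have hray : ∀ᵐ x ∂μ, u₀ x - u₀ (T₀ x) = ‖x - T₀ x‖ := by
    simpa using ae_sub_eq_norm_of_isKantorovichPotential aemeasurable_id hT₀m hΩc hΩμ hT₀Ω
      (by rwa [Measure.map_id]) (by rwa [Measure.map_id])
  have hdiff : ∀ᵐ x ∂μ, DifferentiableAt ℝ u₀ x := hac.ae_le hu₀.1.ae_differentiableAt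
  have hlong : ∀ᵐ x ∂μ, η₀ < ‖x - T₀ x‖ :=
    ae_lt_of_lt_essInf hη₀ (Filter.isBoundedUnder_of ⟨0, fun _ => norm_nonneg _⟩)
  have hf₀Ω : ∀ᵐ x ∂μ, f₀ x ∈ cthickening η₀ Ω := by
    filter_upwards [hdiff, hΩμ] with x hdx hx
    refine mem_cthickening_of_dist_le _ x η₀ Ω hx ?_
    rw [hf₀ x hdx, dist_eq_norm, sub_sub_cancel_left, norm_neg, norm_smul,
      Real.norm_of_nonneg hη₀pos.le]
    simpa using mul_le_mul_of_nonneg_left (hu₀.1.norm_gradient_le x) hη₀pos.le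
  have hsat : ∀ᵐ x ∂μ, u₀ (f₀ x) - u₀ (T₀ x) = ‖f₀ x - T₀ x‖ := by
    filter_upwards [hdiff, hray, hlong] with x hdx hx hlx
    rw [← dist_eq_norm] at hx hlx ⊢
    rw [hf₀ x hdx]
    exact hu₀.1.sub_gradient_step_sub_eq_dist hdx hx hη₀pos.le hlx
  exact isKantorovichPotential_map hf₀m.aemeasurable hT₀m hΩc.cthickening hf₀Ω
    (hT₀Ω.mono fun x hx => self_subset_cthickening Ω hx) hu₀.1 hsat

/-- if `0 < η₀ < ℓ₀(T₀)`, then `u₀` is still a Kantorovich potential for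
the pair `((f₀)_#μ, ν)`, where `f₀ = Id - η₀ ∇u₀` (extended by the identity where `∇u₀`
does not exist). -/
theorem potential_persists_after_step {d : ℕ} (Ω : Set (Euc d))
    (hΩc : IsCompact Ω) (hΩconv : Convex ℝ Ω)
    (μ ν : Measure (Euc d)) [IsProbabilityMeasure μ] [IsProbabilityMeasure ν]
    (hμΩ : μ Ωᶜ = 0) (hνΩ : ν Ωᶜ = 0) (hac : μ ≪ volume)
    (u₀ : Euc d → ℝ) (hu₀ : IsKantorovichPotential u₀ μ ν)
    (T₀ : Euc d → Euc d) (hT₀ : IsOptimalMap T₀ μ ν)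
    (η₀ : ℝ) (hη₀pos : 0 < η₀) (hη₀ : η₀ < ell0 T₀ μ)
    (f₀ : Euc d → Euc d) (hf₀m : Measurable f₀)
    (hf₀ : ∀ x, DifferentiableAt ℝ u₀ x → f₀ x = x - η₀ • gradient u₀ x)
    (hf₀' : ∀ x, ¬ DifferentiableAt ℝ u₀ x → f₀ x = x) :
    IsKantorovichPotential u₀ (Measure.map f₀ μ) ν :=
  potential_persists_after_step_general Ω hΩc μ ν hμΩ hνΩ hac u₀ hu₀ T₀ hT₀ η₀ hη₀pos hη₀ f₀ hf₀m
    hf₀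
end
end

section
/- Let u be 1-Lipschitz on Ω and z a point lying in the interiors of two distinct transport rays of u. Then the set of all such points z (intersections of distinct transport ray interiors) is empty; equivalently, any point interior to a transport ray lies in exactly one transport ray. -/
open MeasureTheory

noncomputable section

/-!
Saturation `u p - u q = ‖p - q‖` of a 1-Lipschitz `u` passes to sub-segments and, through a
common point `z`, to concatenations `[p, z] ∪ [z, q]`; in a strictly convex space the latter
forces `z ∈ [p, q]`. So if `z` is interior to the rays `[x, y]` and `[x', y']`, then `z` lies
on `[x, y']` and on `[x', y]`: the four points are on one line, ordered `x, x'` before `z`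
and `y, y'` after it. The union of the two rays is then a saturated segment `[P, Q]` in `Ω`
containing both, and maximality of each ray identifies it with `[P, Q]`.
-/

open Set AffineMap

section Saturation

variable {E : Type*} [NormedAddCommGroup E] {u : E → ℝ} {s : Set E} {p q w : E}

lemma LipschitzOnWith.sub_le_norm_sub_s18 (hu : LipschitzOnWith 1 u s) (hp : p ∈ s) (hq : q ∈ s) :
    u p - u q ≤ ‖p - q‖ := by
  simpa [Real.dist_eq, dist_eq_norm] using (le_abs_self _).trans (hu.dist_le_mul p hp q hq)

lemma LipschitzOnWith.sub_eq_norm_sub_trans (hu : LipschitzOnWith 1 u s) (hp : p ∈ s)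
    (hq : q ∈ s) (hpw : u p - u w = ‖p - w‖) (hwq : u w - u q = ‖w - q‖) :
    u p - u q = ‖p - q‖ :=
  le_antisymm (hu.sub_le_norm_sub_s18 hp hq) (by linarith [norm_sub_le_norm_sub_add_norm_sub p w q])

variable [NormedSpace ℝ E]

lemma LipschitzOnWith.sub_eq_norm_sub_of_mem_segment (hu : LipschitzOnWith 1 u s)
    (hpq : segment ℝ p q ⊆ s) (hsat : u p - u q = ‖p - q‖) (hw : w ∈ segment ℝ p q) :
    u p - u w = ‖p - w‖ ∧ u w - u q = ‖w - q‖ := by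
  have hpw := hu.sub_le_norm_sub_s18 (hpq (left_mem_segment ℝ p q)) (hpq hw)
  have hwq := hu.sub_le_norm_sub_s18 (hpq hw) (hpq (right_mem_segment ℝ p q))
  have hdist : dist p w + dist w q = dist p q := dist_add_dist_of_mem_segment hw
  simp only [dist_eq_norm] at hdist
  constructor <;> linarith

lemma LipschitzOnWith.wbtw_of_sub_eq_norm_sub [StrictConvexSpace ℝ E]
    (hu : LipschitzOnWith 1 u s) (hp : p ∈ s) (hq : q ∈ s) (hpw : u p - u w = ‖p - w‖)
    (hwq : u w - u q = ‖w - q‖) : Wbtw ℝ p w q := by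
  have hpq := hu.sub_eq_norm_sub_trans hp hq hpw hwq
  rw [← dist_add_dist_eq_iff, dist_eq_norm, dist_eq_norm, dist_eq_norm]
  linarith

end Saturation

section Collinear

variable {E : Type*} [NormedAddCommGroup E] [NormedSpace ℝ E] {x y x' y' z : E}

lemma sbtw_of_mem_openSegment (hz : z ∈ openSegment ℝ x y) (hxy : x ≠ y) : Sbtw ℝ x z y :=
  sbtw_iff_mem_image_Ioo_and_ne.2 ⟨openSegment_eq_image_lineMap ℝ x y ▸ hz, hxy⟩

lemma Wbtw.exists_pos_sub_eq_smul (h : Wbtw ℝ x z y) (hzx : z ≠ x) (hzy : z ≠ y) :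
    ∃ r : ℝ, 0 < r ∧ z - x = r • (y - z) :=
  (wbtw_iff_sameRay_vsub.1 h).exists_pos_right (sub_ne_zero.2 hzx) (sub_ne_zero.2 hzy.symm)

lemma AffineMap.segment_union_segment (f : ℝ →ᵃ[ℝ] E) {a b a' b' : ℝ} (hab : a ≤ b)
    (hab' : a' ≤ b') (h₁ : a' ≤ b) (h₂ : a ≤ b') :
    segment ℝ (f a) (f b) ∪ segment ℝ (f a') (f b') =
      segment ℝ (f (min a a')) (f (max b b')) := by
  rw [← image_segment, ← image_segment, ← image_segment, segment_eq_Icc hab,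
    segment_eq_Icc hab', segment_eq_Icc ((min_le_left _ _).trans (hab.trans (le_max_left _ _))),
    ← image_union, Icc_union_Icc' h₁ h₂]

lemma exists_lineMap_eq_of_sbtw_of_wbtw (hs : Sbtw ℝ x z y) (hs' : Sbtw ℝ x' z y')
    (hx'y : Wbtw ℝ x' z y) (hxy' : Wbtw ℝ x z y') :
    ∃ a a' b : ℝ, 0 < a ∧ 0 < a' ∧ 0 < b ∧
      x = lineMap z y (-a) ∧ x' = lineMap z y (-a') ∧ y' = lineMap z y b := by
  obtain ⟨a, ha, hxa⟩ := hs.wbtw.exists_pos_sub_eq_smul hs.ne_left hs.ne_right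
  obtain ⟨a', ha', hxa'⟩ := hx'y.exists_pos_sub_eq_smul hs'.ne_left hs.ne_right
  obtain ⟨c, hc, hyc⟩ := hxy'.exists_pos_sub_eq_smul hs.ne_left hs'.ne_right
  refine ⟨a, a', a / c, ha, ha', div_pos ha hc, ?_, ?_, ?_⟩ <;>
    simp only [lineMap_apply, vsub_eq_sub, vadd_eq_add]
  · rw [neg_smul, ← hxa]; abel
  · rw [neg_smul, ← hxa']; abel
  · rw [div_eq_inv_mul, mul_smul, ← hxa, hyc, inv_smul_smul₀ hc.ne']; abel

lemma exists_segment_eq_union_of_sbtw_of_wbtw (hs : Sbtw ℝ x z y) (hs' : Sbtw ℝ x' z y')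
    (hx'y : Wbtw ℝ x' z y) (hxy' : Wbtw ℝ x z y') :
    ∃ P Q : E, (P = x ∨ P = x') ∧ (Q = y ∨ Q = y') ∧ P ≠ Q ∧
      segment ℝ x y ∪ segment ℝ x' y' = segment ℝ P Q := by
  obtain ⟨a, a', b, ha, ha', hb, rfl, rfl, rfl⟩ := exists_lineMap_eq_of_sbtw_of_wbtw hs hs' hx'y hxy'
  have hunion := (lineMap z y : ℝ →ᵃ[ℝ] E).segment_union_segment (a := -a) (b := 1) (a' := -a') (b' := b)
    (by linarith) (by linarith) (by linarith) (by linarith)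
  rw [lineMap_apply_one] at hunion
  refine ⟨_, _, ?_, ?_, ?_, hunion⟩
  · rcases min_choice (-a) (-a') with h | h <;> simp [h]
  · rcases max_choice 1 b with h | h <;> simp [h]
  · exact (lineMap_injective ℝ hs.ne_right).ne
      ((min_le_left _ _).trans_lt (lt_max_of_lt_left (by linarith))).ne

end Collinear

theorem transport_ray_interiors_disjoint_general {d : ℕ} (Ω : Set (Euc d))
    (u : Euc d → ℝ) (hu : LipschitzOnWith 1 u Ω)
    (x y x' y' z : Euc d)
    (h1 : IsTransportRay u Ω x y) (h2 : IsTransportRay u Ω x' y')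
    (hz : z ∈ openSegment ℝ x y) (hz' : z ∈ openSegment ℝ x' y') :
    segment ℝ x y = segment ℝ x' y' := by
  obtain ⟨hxy, hΩ, hsat, hmax⟩ := h1
  obtain ⟨hxy', hΩ', hsat', hmax'⟩ := h2
  have hs := sbtw_of_mem_openSegment hz hxy
  have hs' := sbtw_of_mem_openSegment hz' hxy'
  obtain ⟨hxz, hzy⟩ := hu.sub_eq_norm_sub_of_mem_segment hΩ hsat hs.wbtw.mem_segment
  obtain ⟨hx'z, hzy'⟩ := hu.sub_eq_norm_sub_of_mem_segment hΩ' hsat' hs'.wbtw.mem_segment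
  have hx'y := hu.wbtw_of_sub_eq_norm_sub (hΩ' (left_mem_segment ℝ x' y'))
    (hΩ (right_mem_segment ℝ x y)) hx'z hzy
  have hxy' := hu.wbtw_of_sub_eq_norm_sub (hΩ (left_mem_segment ℝ x y))
    (hΩ' (right_mem_segment ℝ x' y')) hxz hzy'
  obtain ⟨P, Q, hP, hQ, hPQ, hunion⟩ := exists_segment_eq_union_of_sbtw_of_wbtw hs hs' hx'y hxy'
  have hPQΩ : segment ℝ P Q ⊆ Ω := hunion ▸ union_subset hΩ hΩ'
  have hPz : u P - u z = ‖P - z‖ := by rcases hP with rfl | rfl <;> assumption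
  have hzQ : u z - u Q = ‖z - Q‖ := by rcases hQ with rfl | rfl <;> assumption
  have hsatPQ := hu.sub_eq_norm_sub_trans (hPQΩ (left_mem_segment ℝ P Q))
    (hPQΩ (right_mem_segment ℝ P Q)) hPz hzQ
  rw [← hmax P Q hPQ hPQΩ hsatPQ (hunion ▸ subset_union_left),
    hmax' P Q hPQ hPQΩ hsatPQ (hunion ▸ subset_union_right)]

/-- a point interior to a transport ray lies in exactly one transport ray:
two rays whose interiors share a point coincide as segments. -/
theorem transport_ray_interiors_disjoint {d : ℕ} (Ω : Set (Euc d))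
    (hΩc : IsCompact Ω) (hΩconv : Convex ℝ Ω)
    (u : Euc d → ℝ) (hu : LipschitzOnWith 1 u Ω)
    (x y x' y' z : Euc d)
    (h1 : IsTransportRay u Ω x y) (h2 : IsTransportRay u Ω x' y')
    (hz : z ∈ openSegment ℝ x y) (hz' : z ∈ openSegment ℝ x' y') :
    segment ℝ x y = segment ℝ x' y' :=
  transport_ray_interiors_disjoint_general Ω u hu x y x' y' z h1 h2 hz hz'
end
end
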